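/- Let X be a complex Banach space and T a quasi-compact bounded linear operator on X with r(T) = ‖T‖ ≥ 1. Then there exists at least one eigenvalue λ of T with |λ| = r(T), and for every eigenvalue λ with |λ| = r(T) the operator T − λI is a Browder operator with ascent one: it has closed range, dim ker(T − λI) = dim ker(T* − λI) < ∞, ker((T − λI)²) = ker(T − λI), and range((T − λI)²) = range(T − λI). -/

import Mathlib

/-- The dual (transpose) operator `T* : X* → X*`, `T* f = f ∘ T`, of a bounded operator `T`
on a normed space `X`. -/
noncomputable def dualOp {X : Type*} [NormedAddCommGroup X] [NormedSpace ℂ X]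
    (T : X →L[ℂ] X) : StrongDual ℂ X →L[ℂ] StrongDual ℂ X :=
  (ContinuousLinearMap.compL ℂ X X ℂ).flip T

/-- A bounded operator `T` on a Banach space is *quasi-compact* if some power `T ^ m` (with
`m > 0`) is within distance `< 1` (in operator norm) of a compact operator. -/
def IsQuasiCompact {X : Type*} [NormedAddCommGroup X] [NormedSpace ℂ X]
    (T : X →L[ℂ] X) : Prop :=
  ∃ m : ℕ, 0 < m ∧ ∃ K : X →L[ℂ] X, IsCompactOperator K ∧ ‖T ^ m - K‖ < 1

/-!
Let `|λ| = ‖T‖` and `s = tλ` with `t > 0`. Then `λ + s` lies outside the closed disc of radius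
`‖T‖`, and `‖(λ + s - T) x‖ ≥ ‖s x‖`. Applied to `s x + (T - λ) x` when `(T - λ)² x = 0`, this
forces `(T - λ) x = 0`. Applied to `v = s (λ + s - T)⁻¹ y`, it gives vectors with `‖v‖ ≤ ‖y‖`,
`(T - λ) v = O(t)` and `y - v ∈ range (T - λ)`.

Quasi-compactness and `|λ| ≥ 1` make `T - λ` left invertible modulo compact operators, since
`T^m - λ^m = G (T - λ)` is a compact operator minus an invertible one. So bounded sequences on
which `T - λ` tends to zero have convergent subsequences, `ker (T - λ)` is finite dimensional and
`range (T - λ)` is closed. Letting `t → 0` then gives `X = ker (T - λ) ⊕ range (T - λ)`, from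
which `range (T - λ)² = range (T - λ)`, `ker (T* - λ) ≅ ker (T - λ)*`, and, when `λ ∈ σ(T)` has
maximal modulus, `ker (T - λ) ≠ 0`.
-/

open Filter Topology Metric

section LeftInverseModuloCompact

variable {𝕜 X : Type*} [RCLike 𝕜] [NormedAddCommGroup X] [NormedSpace 𝕜 X]
  {S B C : X →L[𝕜] X}

theorem exists_tendsto_subseq_of_mul_eq_one_sub (hC : IsCompactOperator C) (hBS : B * S = 1 - C)
    {x : ℕ → X} {M : ℝ} (hx : ∀ n, ‖x n‖ ≤ M) (hSx : Tendsto (fun n ↦ S (x n)) atTop (𝓝 0)) :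
    ∃ y, ∃ φ : ℕ → ℕ, StrictMono φ ∧ Tendsto (x ∘ φ) atTop (𝓝 y) := by
  have hCx : ∀ n, C (x n) ∈ closure (C.toLinearMap '' closedBall 0 M) := fun n ↦
    subset_closure ⟨x n, mem_closedBall_zero_iff.2 (hx n), rfl⟩
  obtain ⟨y, -, φ, hφ, hy⟩ :=
    (IsCompactOperator.isCompact_closure_image_closedBall hC M).tendsto_subseq hCx
  have hsplit : ∀ n, x n = C (x n) + B (S (x n)) := fun n ↦ by
    simpa [add_comm] using congr($hBS (x n) + C (x n)).symm
  have hBSx : Tendsto (fun n ↦ B (S (x (φ n)))) atTop (𝓝 0) := by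
    simpa [Function.comp_def] using (B.continuous.tendsto 0).comp (hSx.comp hφ.tendsto_atTop)
  refine ⟨y, φ, hφ, ?_⟩
  simpa [Function.comp_def, ← hsplit] using hy.add hBSx

theorem finiteDimensional_ker_of_mul_eq_one_sub (hC : IsCompactOperator C)
    (hBS : B * S = 1 - C) : FiniteDimensional 𝕜 S.ker := by
  refine .of_isCompact_closedBall₀ 𝕜 one_pos (isCompact_iff_isSeqCompact.2 fun u hu ↦ ?_)
  have hu1 : ∀ n, ‖(u n : X)‖ ≤ 1 := fun n ↦ by simpa using hu n
  obtain ⟨y, φ, hφ, hy⟩ := exists_tendsto_subseq_of_mul_eq_one_sub hC hBS hu1 (by simp)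
  have hyS : y ∈ S.ker :=
    (S.isClosed_ker).mem_of_tendsto hy (Eventually.of_forall fun n ↦ (u (φ n)).2)
  refine ⟨⟨y, hyS⟩, ?_, φ, hφ, tendsto_subtype_rng.2 hy⟩
  simpa using le_of_tendsto' hy.norm fun n ↦ hu1 (φ n)

theorem exists_norm_le_mul_norm_apply_of_isCompl (hC : IsCompactOperator C)
    (hBS : B * S = 1 - C) {M : Submodule 𝕜 X} (hM : IsClosed (M : Set X))
    (hcompl : IsCompl S.ker M) : ∃ c, ∀ m ∈ M, ‖m‖ ≤ c * ‖S m‖ := by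
  by_contra! h
  have hnormalized : ∀ n : ℕ, ∃ m ∈ M, ‖m‖ = 1 ∧ ‖S m‖ < 1 / (n + 1) := fun n ↦ by
    obtain ⟨m, hmM, hm⟩ := h (n + 1)
    have hm0 : 0 < ‖m‖ := (mul_nonneg (by positivity) (norm_nonneg _)).trans_lt hm
    refine ⟨(‖m‖⁻¹ : 𝕜) • m, M.smul_mem _ hmM, by simp [norm_smul, hm0.ne'], ?_⟩
    rw [map_smul, norm_smul, norm_inv, RCLike.norm_ofReal, abs_of_pos hm0,
      inv_mul_lt_iff₀ hm0, mul_one_div, lt_div_iff₀ (by positivity)]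
    linarith
  choose u huM hu1 hSu using hnormalized
  have hSu0 : Tendsto (fun n ↦ S (u n)) atTop (𝓝 0) :=
    squeeze_zero_norm (fun n ↦ (hSu n).le) tendsto_one_div_add_atTop_nhds_zero_nat
  obtain ⟨y, φ, hφ, hy⟩ :=
    exists_tendsto_subseq_of_mul_eq_one_sub hC hBS (fun n ↦ (hu1 n).le) hSu0
  have hyM : y ∈ M := hM.mem_of_tendsto hy (Eventually.of_forall fun n ↦ huM (φ n))
  have hyS : y ∈ S.ker :=
    tendsto_nhds_unique ((S.continuous.tendsto y).comp hy) (hSu0.comp hφ.tendsto_atTop)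
  have hy1 : ‖y‖ = 1 := tendsto_nhds_unique hy.norm (by simp [hu1])
  simp [Submodule.disjoint_def.1 hcompl.disjoint y hyS hyM] at hy1

theorem isClosed_range_of_mul_eq_one_sub [CompleteSpace X] (hC : IsCompactOperator C)
    (hBS : B * S = 1 - C) : IsClosed (S.range : Set X) := by
  have := finiteDimensional_ker_of_mul_eq_one_sub hC hBS
  obtain ⟨M, hM, hcompl⟩ :=
    (Submodule.ClosedComplemented.of_finiteDimensional S.ker).exists_isClosed_isCompl
  obtain ⟨c, hc⟩ := exists_norm_le_mul_norm_apply_of_isCompl hC hBS hM hcompl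
  have := hM.completeSpace_coe
  have hrange : (S.range : Set X) = Set.range (S ∘L M.subtypeL) := by
    ext y
    constructor
    · rintro ⟨x, rfl⟩
      obtain ⟨k, m, hk, hm, rfl⟩ := Submodule.codisjoint_iff_exists_add_eq.1 hcompl.codisjoint x
      exact ⟨⟨m, hm⟩, by simp [show S k = 0 from hk]⟩
    · rintro ⟨m, rfl⟩
      exact ⟨m, rfl⟩
  rw [hrange]
  have hbound : ∀ m : M, ‖m‖ ≤ max c 0 * ‖(S ∘L M.subtypeL) m‖ := fun m ↦
    (hc m m.2).trans (mul_le_mul_of_nonneg_right (le_max_left _ _) (norm_nonneg _))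
  exact ((S ∘L M.subtypeL).antilipschitz_of_bound (K := ⟨max c 0, le_max_right _ _⟩)
    hbound).isClosed_range (S ∘L M.subtypeL).uniformContinuous

theorem mem_ker_sup_range_of_mul_eq_one_sub [CompleteSpace X] (hC : IsCompactOperator C)
    (hBS : B * S = 1 - C) {y : X} {v : ℕ → X} {M : ℝ} (hv : ∀ n, ‖v n‖ ≤ M)
    (hSv : Tendsto (fun n ↦ S (v n)) atTop (𝓝 0)) (hyv : ∀ n, y - v n ∈ S.range) :
    y ∈ S.ker ⊔ S.range := by
  obtain ⟨p, φ, hφ, hp⟩ := exists_tendsto_subseq_of_mul_eq_one_sub hC hBS hv hSv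
  have hpS : p ∈ S.ker :=
    tendsto_nhds_unique ((S.continuous.tendsto p).comp hp) (hSv.comp hφ.tendsto_atTop)
  have hyp : y - p ∈ S.range :=
    (isClosed_range_of_mul_eq_one_sub hC hBS).mem_of_tendsto (tendsto_const_nhds.sub hp)
      (Eventually.of_forall fun n ↦ hyv (φ n))
  simpa using Submodule.add_mem_sup hpS hyp

end LeftInverseModuloCompact

section Spectrum

variable {𝕜 X : Type*} [RCLike 𝕜] [NormedAddCommGroup X] [NormedSpace 𝕜 X] [CompleteSpace X]

theorem isUnit_smul_one_sub_of_norm_lt {T : X →L[𝕜] X} {z : 𝕜} (h : ‖T‖ < ‖z‖) :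
    IsUnit (z • (1 : X →L[𝕜] X) - T) := by
  have hρ := spectrum.mem_resolventSet_of_norm_lt_mul (a := T)
    ((mul_le_of_le_one_right (norm_nonneg _) ContinuousLinearMap.norm_id_le).trans_lt h)
  rwa [spectrum.mem_resolventSet_iff, Algebra.algebraMap_eq_smul_one] at hρ

theorem ker_ne_bot_of_mem_spectrum {T : X →L[𝕜] X} {z : 𝕜} (hz : z ∈ spectrum 𝕜 T)
    (h : Codisjoint (T - z • 1).ker (T - z • 1).range) : (T - z • 1).ker ≠ ⊥ := by
  intro hker
  replace h : (T - z • 1).range = ⊤ := by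
    rw [← codisjoint_iff.1 h, hker, bot_sup_eq]
  have hunit : IsUnit (T - z • 1) := ContinuousLinearMap.isUnit_iff_bijective.2
    ⟨LinearMap.ker_eq_bot.1 hker, LinearMap.range_eq_top.1 h⟩
  refine spectrum.mem_iff.1 hz ?_
  rw [Algebra.algebraMap_eq_smul_one, ← neg_sub]
  exact hunit.neg

end Spectrum

section KerRange

variable {𝕜 X : Type*} [RCLike 𝕜] [NormedAddCommGroup X] [NormedSpace 𝕜 X] {S : X →L[𝕜] X}

theorem disjoint_ker_range_of_ker_sq_eq (h : (S ^ 2).ker = S.ker) : Disjoint S.ker S.range := by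
  refine Submodule.disjoint_def.2 fun y hy ⟨x, hx⟩ ↦ ?_
  have hx2 : x ∈ (S ^ 2).ker := by
    simpa [pow_two, ← hx] using hy
  simpa [← hx] using (h ▸ hx2 : x ∈ S.ker)

theorem range_sq_eq_of_codisjoint (h : Codisjoint S.ker S.range) : (S ^ 2).range = S.range := by
  refine le_antisymm (fun y ⟨x, hx⟩ ↦ ⟨S x, by simpa [pow_two] using hx⟩) fun y ⟨x, hx⟩ ↦ ?_
  obtain ⟨k, _, hk, ⟨w, rfl⟩, rfl⟩ := Submodule.codisjoint_iff_exists_add_eq.1 h x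
  exact ⟨w, by simpa [pow_two, show S k = 0 from hk] using hx⟩

end KerRange

section Normaloid

variable {𝕜 X : Type*} [RCLike 𝕜] [NormedAddCommGroup X] [NormedSpace 𝕜 X]
  {T : X →L[𝕜] X} {l : 𝕜} {t : ℝ}

theorem norm_smul_le_norm_smul_sub_apply (hl : ‖l‖ = ‖T‖) (ht : 0 ≤ t) (x : X) :
    ‖((t : 𝕜) * l) • x‖ ≤ ‖((t : 𝕜) * l) • x - (T - l • 1) x‖ := by
  have hshift : ((t : 𝕜) * l) • x - (T - l • 1) x = (((1 + t : ℝ) : 𝕜) * l) • x - T x := by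
    simp only [sub_apply, smul_apply, one_apply_eq_self, RCLike.ofReal_add, RCLike.ofReal_one]
    module
  calc ‖((t : 𝕜) * l) • x‖ = (1 + t) * ‖l‖ * ‖x‖ - ‖T‖ * ‖x‖ := by
        rw [norm_smul, norm_mul, RCLike.norm_ofReal, abs_of_nonneg ht, hl]; ring
    _ ≤ ‖(((1 + t : ℝ) : 𝕜) * l) • x‖ - ‖T x‖ := by
        rw [norm_smul, norm_mul, RCLike.norm_ofReal, abs_of_nonneg (by linarith)]
        linarith [T.le_opNorm x]
    _ ≤ _ := hshift ▸ norm_sub_norm_le _ _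

theorem surjective_smul_sub_apply [CompleteSpace X] (hl : ‖l‖ = ‖T‖) (hl0 : l ≠ 0)
    (ht : 0 < t) : Function.Surjective fun x ↦ ((t : 𝕜) * l) • x - (T - l • 1) x := by
  have hz : ‖T‖ < ‖(1 + (t : 𝕜)) * l‖ := by
    rw [norm_mul, ← RCLike.ofReal_one, ← RCLike.ofReal_add, RCLike.norm_ofReal,
      abs_of_pos (by linarith), ← hl]
    exact lt_mul_of_one_lt_left (norm_pos_iff.2 hl0) (by linarith)
  convert (ContinuousLinearMap.isUnit_iff_bijective.1 (isUnit_smul_one_sub_of_norm_lt hz)).2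
    using 2 with x
  simp only [sub_apply, smul_apply, one_apply_eq_self]
  module

theorem ker_sq_sub_smul_one_eq_ker (hl : ‖l‖ = ‖T‖) :
    ((T - l • 1) ^ 2).ker = (T - l • 1).ker := by
  rcases eq_or_ne l 0 with rfl | hl0
  · simp [norm_eq_zero.1 (hl.symm.trans norm_zero)]
  set S := T - l • 1
  refine le_antisymm (fun x hx ↦ ?_) fun x hx ↦ by
    simp [pow_two, show S x = 0 from hx]
  replace hx : S (S x) = 0 := by simpa [pow_two] using hx
  have hbound : ∀ t : ℝ, 0 < t → ‖S x‖ ≤ t * (2 * ‖l‖ * ‖x‖) := fun t ht ↦ by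
    set s : 𝕜 := (t : 𝕜) * l
    have hs : 0 < ‖s‖ := by simp [s, ht.ne', hl0]
    have key := norm_smul_le_norm_smul_sub_apply hl ht.le (s • x + S x)
    rw [show s • (s • x + S x) - S (s • x + S x) = s • (s • x) by simp [hx],
      norm_smul, norm_smul] at key
    have hsx : ‖s • x + S x‖ ≤ ‖s • x‖ := le_of_mul_le_mul_left key hs
    calc ‖S x‖ = ‖(s • x + S x) - s • x‖ := by rw [add_sub_cancel_left]
      _ ≤ ‖s • x + S x‖ + ‖s • x‖ := norm_sub_le _ _
      _ ≤ t * (2 * ‖l‖ * ‖x‖) := by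
        rw [norm_smul, norm_mul, RCLike.norm_ofReal, abs_of_pos ht] at hsx ⊢
        linarith
  refine norm_le_zero_iff.1 (ge_of_tendsto (x := 𝓝[>] (0 : ℝ)) ?_
    (eventually_nhdsWithin_of_forall hbound))
  exact tendsto_nhdsWithin_of_tendsto_nhds
    ((continuous_mul_const (2 * ‖l‖ * ‖x‖)).tendsto' 0 0 (zero_mul _))

theorem exists_seq_tendsto_sub_smul_one_apply_zero [CompleteSpace X] (hl : ‖l‖ = ‖T‖)
    (hl0 : l ≠ 0) (y : X) :
    ∃ v : ℕ → X, (∀ n, ‖v n‖ ≤ ‖y‖) ∧ Tendsto (fun n ↦ (T - l • 1) (v n)) atTop (𝓝 0) ∧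
      ∀ n, y - v n ∈ (T - l • 1).range := by
  set S := T - l • 1
  have ht : ∀ n : ℕ, 0 < 1 / ((n : ℝ) + 1) := fun n ↦ by positivity
  set s : ℕ → 𝕜 := fun n ↦ ((1 / ((n : ℝ) + 1) : ℝ) : 𝕜) * l
  choose x hx using fun n ↦ surjective_smul_sub_apply hl hl0 (ht n) y
  replace hx : ∀ n, s n • x n - S (x n) = y := hx
  have hSx : ∀ n, S (x n) = s n • x n - y := fun n ↦ by rw [← hx n, sub_sub_cancel]
  have hsx : ∀ n, ‖s n • x n‖ ≤ ‖y‖ := fun n ↦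
    hx n ▸ norm_smul_le_norm_smul_sub_apply hl (ht n).le (x n)
  refine ⟨fun n ↦ s n • x n, hsx, ?_, fun n ↦ ⟨-x n, by simp [hSx]⟩⟩
  refine squeeze_zero_norm (a := fun n : ℕ ↦ 1 / ((n : ℝ) + 1) * (2 * ‖l‖ * ‖y‖)) (fun n ↦ ?_)
    (by simpa using tendsto_one_div_add_atTop_nhds_zero_nat.mul_const (2 * ‖l‖ * ‖y‖))
  calc ‖S (s n • x n)‖ = ‖s n‖ * ‖s n • x n - y‖ := by rw [map_smul, hSx, norm_smul]
    _ ≤ ‖s n‖ * (‖y‖ + ‖y‖) := by gcongr; exact (norm_sub_le _ _).trans (by linarith [hsx n])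
    _ = _ := by rw [norm_mul, RCLike.norm_ofReal, abs_of_pos (ht n)]; ring

end Normaloid

section Dual

variable {X : Type*} [NormedAddCommGroup X] [NormedSpace ℂ X]

theorem dualOp_apply (T : X →L[ℂ] X) (ψ : StrongDual ℂ X) : dualOp T ψ = ψ.comp T := rfl

theorem dualOp_sub_smul_one (T : X →L[ℂ] X) (l : ℂ) :
    (dualOp T - l • 1 : StrongDual ℂ X →L[ℂ] StrongDual ℂ X) = dualOp (T - l • 1) := by
  ext ψ x
  simp only [sub_apply, smul_apply, one_apply_eq_self, dualOp_apply,
    ContinuousLinearMap.comp_apply, map_sub, map_smul]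

noncomputable def kerDualOpEquiv {S : X →L[ℂ] X} (h : Submodule.IsTopCompl S.ker S.range) :
    (dualOp S).ker ≃ₗ[ℂ] StrongDual ℂ S.ker where
  toFun ψ := (ψ : StrongDual ℂ X).comp S.ker.subtypeL
  invFun f := ⟨f.comp (S.ker.projectionOntoL S.range h), by
    ext x
    show f (S.ker.projectionOntoL S.range h (S x)) = 0
    rw [(Submodule.projectionOntoL_apply_eq_zero_iff h (x := S x)).2 ⟨x, rfl⟩, map_zero]⟩
  map_add' _ _ := rfl
  map_smul' _ _ := rfl
  left_inv ψ := by
    ext x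
    show (ψ : StrongDual ℂ X) (S.ker.projectionOntoL S.range h x) = (ψ : StrongDual ℂ X) x
    obtain ⟨v, hv⟩ : x - S.ker.projectionOntoL S.range h x ∈ S.range := by
      rw [← Submodule.projectionOntoL_apply_eq_zero_iff h, map_sub,
        Submodule.projectionOntoL_apply_left, sub_self]
    replace hv : S v = _ := hv
    have hψ : (ψ : StrongDual ℂ X) (S v) = 0 := congr($(ψ.2) v)
    rw [hv, map_sub, sub_eq_zero] at hψ
    exact hψ.symm
  right_inv f := by
    ext k
    simp

theorem finiteDimensional_ker_dualOp {S : X →L[ℂ] X} (h : Submodule.IsTopCompl S.ker S.range)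
    [FiniteDimensional ℂ S.ker] : FiniteDimensional ℂ (dualOp S).ker :=
  .equiv (kerDualOpEquiv h).symm

theorem finrank_ker_dualOp {S : X →L[ℂ] X} (h : Submodule.IsTopCompl S.ker S.range)
    [FiniteDimensional ℂ S.ker] : Module.finrank ℂ S.ker = Module.finrank ℂ (dualOp S).ker := by
  rw [(kerDualOpEquiv h).finrank_eq, ← LinearMap.toContinuousLinearMap.finrank_eq,
    Subspace.dual_finrank_eq]

end Dual

section QuasiCompact

variable {X : Type*} [NormedAddCommGroup X] [NormedSpace ℂ X] [CompleteSpace X]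
  {T : X →L[ℂ] X} {l : ℂ}

theorem IsQuasiCompact.exists_mul_sub_smul_one_eq_one_sub (hT : IsQuasiCompact T)
    (hl : 1 ≤ ‖l‖) : ∃ B C : X →L[ℂ] X, IsCompactOperator C ∧ B * (T - l • 1) = 1 - C := by
  obtain ⟨m, -, K, hK, hTK⟩ := hT
  obtain ⟨U, hU⟩ := isUnit_smul_one_sub_of_norm_lt (z := l ^ m)
    (hTK.trans_le (by simpa using one_le_pow₀ hl))
  have hgeom := (Commute.one_right T).smul_right l |>.geom_sum₂_mul m
  rw [smul_pow, one_pow] at hgeom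
  refine ⟨-(↑U⁻¹ * ∑ i ∈ Finset.range m, T ^ i * (l • 1) ^ (m - 1 - i)), ↑U⁻¹ * K,
    hK.clm_comp _, ?_⟩
  rw [neg_mul, mul_assoc, hgeom,
    show T ^ m - l ^ m • 1 = K - ↑U by rw [hU]; abel, mul_sub, U.inv_mul]
  abel

theorem IsQuasiCompact.isCompl_ker_range_sub_smul_one (hT : IsQuasiCompact T) (hl : ‖l‖ = ‖T‖)
    (hT1 : 1 ≤ ‖T‖) : IsCompl (T - l • 1).ker (T - l • 1).range := by
  have hl0 : l ≠ 0 := norm_pos_iff.1 (by linarith)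
  obtain ⟨B, C, hC, hBS⟩ := hT.exists_mul_sub_smul_one_eq_one_sub (hl ▸ hT1)
  refine ⟨disjoint_ker_range_of_ker_sq_eq (ker_sq_sub_smul_one_eq_ker hl),
    codisjoint_iff.2 (eq_top_iff.2 fun y _ ↦ ?_)⟩
  obtain ⟨v, hv, hSv, hyv⟩ := exists_seq_tendsto_sub_smul_one_apply_zero hl hl0 y
  exact mem_ker_sup_range_of_mul_eq_one_sub hC hBS hv hSv hyv

end QuasiCompact

/-- Let `T` be a quasi-compact operator on a complex Banach space with
`r(T) = ‖T‖ ≥ 1` (a normaloid quasi-compact operator).  Then `T` has an eigenvalue of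
modulus `r(T)`, and for every eigenvalue `λ` with `|λ| = r(T)` the operator `T - λI` is a
Browder operator with ascent one. -/
theorem normaloid_quasiCompact_browder_ascent_one
    {X : Type*} [NormedAddCommGroup X] [NormedSpace ℂ X] [CompleteSpace X]
    (T : X →L[ℂ] X) (hqc : IsQuasiCompact T)
    (hrad : spectralRadius ℂ T = (‖T‖₊ : ENNReal)) (hnorm : 1 ≤ ‖T‖) :
    (∃ l : ℂ, LinearMap.ker ((T - l • 1 : X →L[ℂ] X) : X →ₗ[ℂ] X) ≠ ⊥ ∧ (‖l‖₊ : ENNReal) = spectralRadius ℂ T) ∧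
    (∀ l : ℂ, LinearMap.ker ((T - l • 1 : X →L[ℂ] X) : X →ₗ[ℂ] X) ≠ ⊥ → (‖l‖₊ : ENNReal) = spectralRadius ℂ T →
      IsClosed (LinearMap.range ((T - l • 1 : X →L[ℂ] X) : X →ₗ[ℂ] X) : Set X) ∧
      FiniteDimensional ℂ (LinearMap.ker ((T - l • 1 : X →L[ℂ] X) : X →ₗ[ℂ] X)) ∧
      FiniteDimensional ℂ (LinearMap.ker ((dualOp T - l • 1 : StrongDual ℂ X →L[ℂ] StrongDual ℂ X) : StrongDual ℂ X →ₗ[ℂ] StrongDual ℂ X)) ∧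
      Module.finrank ℂ (LinearMap.ker ((T - l • 1 : X →L[ℂ] X) : X →ₗ[ℂ] X)) =
        Module.finrank ℂ (LinearMap.ker ((dualOp T - l • 1 : StrongDual ℂ X →L[ℂ] StrongDual ℂ X) : StrongDual ℂ X →ₗ[ℂ] StrongDual ℂ X)) ∧
      LinearMap.ker (((T - l • 1) ^ 2 : X →L[ℂ] X) : X →ₗ[ℂ] X) = LinearMap.ker ((T - l • 1 : X →L[ℂ] X) : X →ₗ[ℂ] X) ∧
      LinearMap.range (((T - l • 1) ^ 2 : X →L[ℂ] X) : X →ₗ[ℂ] X) = LinearMap.range ((T - l • 1 : X →L[ℂ] X) : X →ₗ[ℂ] X)) := by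
  have hperipheral : ∀ l : ℂ, (‖l‖₊ : ENNReal) = spectralRadius ℂ T ↔ ‖l‖ = ‖T‖ := fun l ↦ by
    rw [hrad, ENNReal.coe_inj, ← NNReal.coe_inj, coe_nnnorm, coe_nnnorm]
  refine ⟨?_, fun l _ hl ↦ ?_⟩
  · have : Nontrivial X := by
      by_contra h
      rw [not_nontrivial_iff_subsingleton] at h
      norm_num [Subsingleton.elim T 0] at hnorm
    obtain ⟨z, hz, hzr⟩ := spectrum.exists_nnnorm_eq_spectralRadius T
    exact ⟨z, ker_ne_bot_of_mem_spectrum hz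
      (hqc.isCompl_ker_range_sub_smul_one ((hperipheral z).1 hzr) hnorm).codisjoint, hzr⟩
  · rw [hperipheral] at hl
    obtain ⟨B, C, hC, hBS⟩ := hqc.exists_mul_sub_smul_one_eq_one_sub (hl ▸ hnorm)
    have hcompl := hqc.isCompl_ker_range_sub_smul_one hl hnorm
    have := finiteDimensional_ker_of_mul_eq_one_sub hC hBS
    have hclosed := isClosed_range_of_mul_eq_one_sub hC hBS
    have htop := Submodule.IsCompl.isTopCompl_of_isClosed hcompl (T - l • 1).isClosed_ker hclosed
    rw [dualOp_sub_smul_one]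
    exact ⟨hclosed, this, finiteDimensional_ker_dualOp htop, finrank_ker_dualOp htop,
      ker_sq_sub_smul_one_eq_ker hl, range_sq_eq_of_codisjoint hcompl.codisjoint⟩
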